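/- Let S be a finite subset of ℤ^n contained in a lattice polytope P, and assume S is not contained in an affine hyperplane. Then there exists a vector v ∈ ℤ^n and a simplex Δ ⊆ S (an affinely independent subset of cardinality n+1) such that the linear form x ↦ ⟨x, v⟩ averaged over Δ is strictly greater than its average over every other simplex T ⊆ S, T ≠ Δ. -/

import Mathlib

/-
Choose `v ∈ ℤ^n` making `p ↦ ⟨p, v⟩` injective on `S`. Simplices in `S` are the bases of the
affine matroid of `S`, and for injective weights a maximum-weight base of a matroid is unique.
-/

def castQ {n : ℕ} (p : Fin n → ℤ) : Fin n → ℚ := fun i => (p i : ℚ)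

/-- A simplex in `ℤ^n`: `n+1` points not contained in an affine hyperplane. -/
def IsSimplex {n : ℕ} (Δ : Finset (Fin n → ℤ)) : Prop :=
  Δ.card = n + 1 ∧
    AffineIndependent ℚ (fun p : {x // x ∈ Δ} => castQ (p : Fin n → ℤ))

section Exchange

variable {α β : Type*} [DecidableEq α]

def HasBasisExchange (base : Finset α → Prop) : Prop :=
  ∀ ⦃B₁ B₂ : Finset α⦄, base B₁ → base B₂ →
    ∀ e ∈ B₁ \ B₂, ∃ y ∈ B₂ \ B₁, base (insert y (B₁.erase e))

variable [AddCommMonoid β] [LinearOrder β] [IsOrderedCancelAddMonoid β]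

theorem Finset.sum_lt_sum_insert_erase {B : Finset α} {W : α → β} {e y : α}
    (he : e ∈ B) (hy : y ∉ B) (hlt : W e < W y) :
    ∑ x ∈ B, W x < ∑ x ∈ insert y (B.erase e), W x := by
  rw [Finset.sum_insert fun h => hy (Finset.mem_of_mem_erase h), ← Finset.add_sum_erase B W he]
  exact add_lt_add_left hlt _

theorem HasBasisExchange.exists_forall_sum_lt {base : Finset α → Prop} (h : HasBasisExchange base)
    (S : Finset α) (W : α → β) (hW : Set.InjOn W S) (hS : ∃ B ⊆ S, base B) :
    ∃ Δ ⊆ S, base Δ ∧ ∀ T ⊆ S, base T → T ≠ Δ → ∑ x ∈ T, W x < ∑ x ∈ Δ, W x := by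
  classical
  obtain ⟨B, hBS, hB⟩ := hS
  obtain ⟨Δ, hΔ, hmax⟩ := (S.powerset.filter base).exists_max_image (fun B => ∑ x ∈ B, W x)
    ⟨B, Finset.mem_filter.2 ⟨Finset.mem_powerset.2 hBS, hB⟩⟩
  simp only [Finset.mem_filter, Finset.mem_powerset, and_imp] at hΔ hmax
  have improve : ∀ B₁ ⊆ S, base B₁ → ∀ B₂ ⊆ S, base B₂ → ∀ e ∈ B₁ \ B₂,
      (∀ y ∈ B₂ \ B₁, W e ≤ W y) → ∑ x ∈ B₁, W x < ∑ x ∈ Δ, W x := by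
    intro B₁ hB₁S hB₁ B₂ hB₂S hB₂ e he hmin
    obtain ⟨y, hy, hbase⟩ := h hB₁ hB₂ e he
    rw [Finset.mem_sdiff] at he hy
    have hlt : W e < W y := (hmin y (Finset.mem_sdiff.2 hy)).lt_of_ne fun hWey =>
      he.2 (hW (hB₁S he.1) (hB₂S hy.1) hWey ▸ hy.1)
    calc ∑ x ∈ B₁, W x < ∑ x ∈ insert y (B₁.erase e), W x :=
          Finset.sum_lt_sum_insert_erase he.1 hy.2 hlt
      _ ≤ ∑ x ∈ Δ, W x := hmax _ (Finset.insert_subset (hB₂S hy.1)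
          ((B₁.erase_subset e).trans hB₁S)) hbase
  -- Exchanging the lightest element of `T ∆ Δ` would produce a heavier base.
  refine ⟨Δ, hΔ.1, hΔ.2, fun T hTS hT hne => (hmax T hTS hT).lt_of_ne fun heq => ?_⟩
  obtain ⟨e, he, hmin⟩ := (symmDiff T Δ).exists_min_image W (Finset.symmDiff_nonempty.2 hne)
  rcases Finset.mem_symmDiff.1 he with heT | heΔ
  · exact (improve T hTS hT Δ hΔ.1 hΔ.2 e (Finset.mem_sdiff.2 heT)
      fun y hy => hmin y (Finset.mem_symmDiff.2 (Or.inr (Finset.mem_sdiff.1 hy)))).ne heq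
  · exact (improve Δ hΔ.1 hΔ.2 T hTS hT e (Finset.mem_sdiff.2 heΔ)
      fun y hy => hmin y (Finset.mem_symmDiff.2 (Or.inl (Finset.mem_sdiff.1 hy)))).false

end Exchange

section Affine

variable {k V P α : Type*} [DivisionRing k] [AddCommGroup V] [Module k V] [AddTorsor V P]
  {f : α → P}

theorem AffineIndependent.insert_of_notMem_affineSpan {s : Set α} {y : α}
    (hs : AffineIndependent k fun x : s => f x) (hy : f y ∉ affineSpan k (f '' s)) :
    AffineIndependent k fun x : ↥(insert y s) => f x := by
  refine AffineIndependent.affineIndependent_of_notMem_span (i := ⟨y, s.mem_insert y⟩) ?_ ?_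
  · let emb : {x : ↥(insert y s) // x ≠ ⟨y, s.mem_insert y⟩} ↪ s :=
      ⟨fun x => ⟨x.1, (Set.mem_insert_iff.1 x.1.2).resolve_left fun h => x.2 (Subtype.ext h)⟩,
        fun a b h => Subtype.ext (Subtype.ext (congrArg (fun z : s => (z : α)) h))⟩
    exact hs.comp_embedding emb
  · refine fun h => hy (affineSpan_mono k ?_ h)
    rintro _ ⟨x, hx, rfl⟩
    exact ⟨x, (Set.mem_insert_iff.1 x.2).resolve_left fun h => hx (Subtype.ext h), rfl⟩

theorem AffineIndependent.exists_insert_sdiff_of_affineSpan_eq_top {s t : Set α}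
    (hs : AffineIndependent k fun x : s => f x) (ht : affineSpan k (f '' t) = ⊤)
    {e : α} (hes : e ∈ s) (het : e ∉ t) :
    ∃ y ∈ t, y ∉ s ∧ AffineIndependent k fun x : ↥(insert y (s \ {e})) => f x := by
  have he : f e ∉ affineSpan k (f '' (s \ {e})) := by
    have := hs.notMem_affineSpan_sdiff ⟨e, hes⟩ Set.univ
    rwa [show (fun x : s => f x) = f ∘ Subtype.val from rfl, Set.image_comp,
      Set.image_sdiff Subtype.val_injective, Set.image_univ, Subtype.range_coe,
      Set.image_singleton] at this
  obtain ⟨y, hyt, hy⟩ : ∃ y ∈ t, f y ∉ affineSpan k (f '' (s \ {e})) := by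
    by_contra! h
    refine he ?_
    have : affineSpan k (f '' t) ≤ affineSpan k (f '' (s \ {e})) :=
      affineSpan_le.2 (Set.image_subset_iff.2 h)
    exact this (ht ▸ AffineSubspace.mem_top k V (f e))
  have hys : y ∉ s := fun hys =>
    hy (mem_affineSpan k ⟨y, ⟨hys, fun hye => het (hye ▸ hyt)⟩, rfl⟩)
  exact ⟨y, hyt, hys, (hs.comp_embedding ⟨Set.inclusion Set.sdiff_subset,
    Set.inclusion_injective _⟩).insert_of_notMem_affineSpan hy⟩

end Affine

open Polynomial in
theorem exists_forall_sum_mul_ne_zero {R : Type*} [CommRing R] [IsDomain R] [Infinite R] {n : ℕ}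
    (D : Finset (Fin n → R)) (hD : (0 : Fin n → R) ∉ D) :
    ∃ v : Fin n → R, ∀ d ∈ D, ∑ i, d i * v i ≠ 0 := by
  classical
  -- `v = (1, t, t², …)` with `t` avoiding the roots of the polynomials `∑ i, d i X^i`, `d ∈ D`.
  let P : (Fin n → R) → R[X] := fun d => ∑ i, C (d i) * X ^ (i : ℕ)
  have hcoeff (d : Fin n → R) (i : Fin n) : (P d).coeff i = d i := by
    simp [P, Fin.val_inj]
  have hP (d : Fin n → R) (hd : d ∈ D) : P d ≠ 0 := by
    intro h0
    have hd0 : d = 0 := funext fun i => by rw [← hcoeff d i, h0, coeff_zero, Pi.zero_apply]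
    exact hD (hd0 ▸ hd)
  obtain ⟨t, ht⟩ := Infinite.exists_notMem_finset (D.biUnion fun d => (P d).roots.toFinset)
  refine ⟨fun i => t ^ (i : ℕ), fun d hd h => ht (Finset.mem_biUnion.2 ⟨d, hd, ?_⟩)⟩
  simpa [mem_roots (hP d hd), P, eval_finsetSum] using h

theorem exists_injOn_sum_mul {R : Type*} [CommRing R] [IsDomain R] [Infinite R] {n : ℕ}
    (S : Finset (Fin n → R)) :
    ∃ v : Fin n → R, Set.InjOn (fun p : Fin n → R => ∑ i, p i * v i) S := by
  classical
  obtain ⟨v, hv⟩ := exists_forall_sum_mul_ne_zero (((S ×ˢ S).image fun x => x.1 - x.2).erase 0)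
    (Finset.notMem_erase _ _)
  refine ⟨v, fun p hp q hq hpq => ?_⟩
  by_contra hne
  refine hv (p - q) (Finset.mem_erase.2 ⟨sub_ne_zero.2 hne,
    Finset.mem_image.2 ⟨(p, q), Finset.mem_product.2 ⟨hp, hq⟩, rfl⟩⟩) ?_
  simpa [sub_mul, sub_eq_zero] using hpq

section Simplex

variable {n : ℕ}

theorem castQ_injective : Function.Injective (castQ (n := n)) :=
  fun _ _ h => funext fun i => Int.cast_injective (congrFun h i)

theorem isSimplex_iff_affineSpan_eq_top {Δ : Finset (Fin n → ℤ)}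
    (h : AffineIndependent ℚ fun p : {x // x ∈ Δ} => castQ (p : Fin n → ℤ)) :
    IsSimplex Δ ↔ affineSpan ℚ (castQ '' (Δ : Set (Fin n → ℤ))) = ⊤ := by
  have hrange : Set.range (fun p : {x // x ∈ Δ} => castQ (p : Fin n → ℤ)) = castQ '' Δ := by
    ext; simp
  rw [IsSimplex, and_iff_left h, ← hrange, h.affineSpan_eq_top_iff_card_eq_finrank_add_one,
    Module.finrank_fin_fun, Fintype.card_coe]

theorem isSimplex_hasBasisExchange : HasBasisExchange (IsSimplex (n := n)) := by
  intro B₁ B₂ h₁ h₂ e he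
  rw [Finset.mem_sdiff] at he
  obtain ⟨y, hy₂, hy₁, hind⟩ := h₁.2.exists_insert_sdiff_of_affineSpan_eq_top
    ((isSimplex_iff_affineSpan_eq_top h₂.2).1 h₂) he.1 he.2
  refine ⟨y, Finset.mem_sdiff.2 ⟨hy₂, hy₁⟩, ?_, ?_⟩
  · rw [Finset.card_insert_of_notMem fun h => hy₁ (Finset.mem_of_mem_erase h),
      Finset.card_erase_of_mem he.1, h₁.1, Nat.add_sub_cancel]
  · rwa [← Finset.coe_erase, ← Finset.coe_insert] at hind

theorem exists_isSimplex_subset (S : Finset (Fin n → ℤ))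
    (hspan : affineSpan ℚ (castQ '' (S : Set (Fin n → ℤ))) = ⊤) : ∃ Δ ⊆ S, IsSimplex Δ := by
  classical
  obtain ⟨t, hts, htspan, ht⟩ := exists_affineIndependent ℚ (Fin n → ℚ) (castQ '' (S : Set _))
  set Δ := S.filter fun p => castQ p ∈ t
  have himage : castQ '' (Δ : Set (Fin n → ℤ)) = t := by
    ext x
    constructor
    · rintro ⟨p, hp, rfl⟩
      exact (Finset.mem_filter.1 hp).2
    · intro hx
      obtain ⟨p, hp, rfl⟩ := hts hx
      exact ⟨p, Finset.mem_filter.2 ⟨hp, hx⟩, rfl⟩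
  let emb : {x // x ∈ Δ} ↪ t := ⟨fun p => ⟨castQ p, (Finset.mem_filter.1 p.2).2⟩,
    fun p q h => Subtype.ext (castQ_injective (congrArg Subtype.val h))⟩
  have hind : AffineIndependent ℚ fun p : {x // x ∈ Δ} => castQ (p : Fin n → ℤ) :=
    ht.comp_embedding emb
  refine ⟨Δ, Finset.filter_subset _ _, (isSimplex_iff_affineSpan_eq_top hind).2 ?_⟩
  rw [himage, htspan, hspan]

end Simplex

/-- If a finite set `S` of lattice points is not contained in an affine hyperplane
(its affine span is everything), then there is a vector `v ∈ ℤ^n` and a simplex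
`Δ ⊆ S` such that the average of `⟨·,v⟩` over `Δ` is strictly greater than its
average over every other simplex `T ⊆ S`. -/
theorem stmt_2 (n : ℕ) (S : Finset (Fin n → ℤ))
    (hspan : affineSpan ℚ (castQ '' (S : Set (Fin n → ℤ))) = ⊤) :
    ∃ (v : Fin n → ℤ) (Δ : Finset (Fin n → ℤ)), Δ ⊆ S ∧ IsSimplex Δ ∧
      ∀ T : Finset (Fin n → ℤ), T ⊆ S → IsSimplex T → T ≠ Δ →
        ((n : ℚ) + 1)⁻¹ * ∑ p ∈ T, ((∑ i, p i * v i : ℤ) : ℚ) <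
          ((n : ℚ) + 1)⁻¹ * ∑ p ∈ Δ, ((∑ i, p i * v i : ℤ) : ℚ) := by
  obtain ⟨v, hv⟩ := exists_injOn_sum_mul S
  obtain ⟨Δ, hΔS, hΔ, hmax⟩ := isSimplex_hasBasisExchange.exists_forall_sum_lt S
    (fun p => ((∑ i, p i * v i : ℤ) : ℚ)) (Int.cast_injective.comp_injOn hv)
    (exists_isSimplex_subset S hspan)
  exact ⟨v, Δ, hΔS, hΔ, fun T hTS hT hne =>
    mul_lt_mul_of_pos_left (hmax T hTS hT hne) (by positivity)⟩
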